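/- arXiv:2106.02418 — 2 statements merged into one kernel-verified Lean document; each statement's English description precedes it below -/
import Mathlib

section
/- (Fukasawa conditions for SSVI.) Let ρ ∈ (−1,1), γ = √(1−ρ²), μ = −ρ/√(1−ρ²), and 0 < b ≤ 2/(1+|ρ|). Then the Fukasawa conditions hold: h(l) − b·g(l) > 0 and h(l) + b·g(l) > 0 for every l ∈ ℝ. -/
/-!
On an SSVI slice the factor `h` collapses to `h(l) = 1/2 + 1/(2√(1-ρ²)√(l²+1))`, so `h > 1/2`,
while `|N'(l)| ≤ 1 + |ρ|` and `b ≤ 2/(1+|ρ|)` give `|b·g(l)| ≤ 1/2`. Hence `h ± b·g > 0`.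
-/

/-- SVI normalized total variance shape: `N(l) = γ + ρ·l + √(l²+1)`. -/
noncomputable def Nf (γ ρ l : ℝ) : ℝ := γ + ρ * l + Real.sqrt (l ^ 2 + 1)

/-- `N'(l) = ρ + l/√(l²+1)`. -/
noncomputable def Nf' (ρ l : ℝ) : ℝ := ρ + l / Real.sqrt (l ^ 2 + 1)

/-- `N''(l) = (l²+1)^(−3/2)`. -/
noncomputable def Nf'' (l : ℝ) : ℝ := (l ^ 2 + 1) ^ (-(3 : ℝ) / 2)

/-- `h(l) = 1 − N'(l)·(l+μ)/(2N(l))`. -/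
noncomputable def hf (γ ρ μ l : ℝ) : ℝ := 1 - Nf' ρ l * (l + μ) / (2 * Nf γ ρ l)

/-- `g(l) = N'(l)/4`. -/
noncomputable def gf (ρ l : ℝ) : ℝ := Nf' ρ l / 4

/-- `g₂(l) = N''(l) − N'(l)²/(2N(l))`. -/
noncomputable def g2 (γ ρ l : ℝ) : ℝ := Nf'' l - (Nf' ρ l) ^ 2 / (2 * Nf γ ρ l)

/-- `G₁(l) = (h(l) − b·g(l))·(h(l) + b·g(l))`. -/
noncomputable def G1 (γ b ρ μ l : ℝ) : ℝ :=
  (hf γ ρ μ l - b * gf ρ l) * (hf γ ρ μ l + b * gf ρ l)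

/-- Fukasawa (weak no-arbitrage) conditions: both factors of `G₁` are positive on `ℝ`. -/
def FukasawaCond (γ b ρ μ : ℝ) : Prop :=
  ∀ l : ℝ, 0 < hf γ ρ μ l - b * gf ρ l ∧ 0 < hf γ ρ μ l + b * gf ρ l

/-- No Butterfly arbitrage (Martini–Mingone characterization): Fukasawa conditions plus
`G₁ + (b/(2σ))·g₂ ≥ 0` on `ℝ`. -/
def ArbitrageFree (γ b ρ μ σ : ℝ) : Prop :=
  FukasawaCond γ b ρ μ ∧ ∀ l : ℝ, 0 ≤ G1 γ b ρ μ l + b / (2 * σ) * g2 γ ρ l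

open Real

lemma abs_lt_sqrt_sq_add_one (l : ℝ) : |l| < √(l ^ 2 + 1) :=
  (lt_sqrt (abs_nonneg l)).2 (by rw [sq_abs]; linarith)

lemma sqrt_one_sub_sq_pos {ρ : ℝ} (hρ : |ρ| < 1) : 0 < √(1 - ρ ^ 2) :=
  sqrt_pos.2 (by nlinarith [sq_abs ρ, abs_nonneg ρ])

lemma Nf_pos {γ ρ : ℝ} (hγ : 0 < γ) (hρ : |ρ| ≤ 1) (l : ℝ) : 0 < Nf γ ρ l := by
  have hρl : |ρ * l| ≤ |l| := by
    rw [abs_mul]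
    exact mul_le_of_le_one_left (abs_nonneg l) hρ
  have := neg_abs_le (ρ * l)
  have := abs_lt_sqrt_sq_add_one l
  unfold Nf
  linarith

lemma abs_Nf'_le (ρ l : ℝ) : |Nf' ρ l| ≤ 1 + |ρ| := by
  have hs : 0 < √(l ^ 2 + 1) := sqrt_pos.2 (by positivity)
  have hl : |l / √(l ^ 2 + 1)| ≤ 1 := by
    rw [abs_div, abs_of_pos hs]
    exact (div_le_one hs).2 (abs_lt_sqrt_sq_add_one l).le
  calc |Nf' ρ l| ≤ |ρ| + |l / √(l ^ 2 + 1)| := abs_add_le _ _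
    _ ≤ 1 + |ρ| := by linarith

lemma Nf'_mul_ssvi {ρ : ℝ} (hρ : |ρ| < 1) (l : ℝ) :
    Nf' ρ l * (l + -ρ / √(1 - ρ ^ 2)) =
      Nf (√(1 - ρ ^ 2)) ρ l * (1 - 1 / (√(1 - ρ ^ 2) * √(l ^ 2 + 1))) := by
  have hρ2 : 0 < 1 - ρ ^ 2 := by nlinarith [sq_abs ρ, abs_nonneg ρ]
  have hγ := sqrt_one_sub_sq_pos hρ
  unfold Nf' Nf
  field_simp
  linear_combination -√(l ^ 2 + 1) * sq_sqrt hρ2.le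
    - √(1 - ρ ^ 2) * sq_sqrt (by positivity : (0 : ℝ) ≤ l ^ 2 + 1)

lemma hf_ssvi {ρ : ℝ} (hρ : |ρ| < 1) (l : ℝ) :
    hf (√(1 - ρ ^ 2)) ρ (-ρ / √(1 - ρ ^ 2)) l =
      1 / 2 + 1 / (2 * √(1 - ρ ^ 2) * √(l ^ 2 + 1)) := by
  have hγ := sqrt_one_sub_sq_pos hρ
  have hs : 0 < √(l ^ 2 + 1) := sqrt_pos.2 (by positivity)
  have hN := (Nf_pos hγ hρ.le l).ne'
  unfold hf
  rw [Nf'_mul_ssvi hρ]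
  field_simp
  ring

lemma half_lt_hf_ssvi {ρ : ℝ} (hρ : |ρ| < 1) (l : ℝ) :
    1 / 2 < hf (√(1 - ρ ^ 2)) ρ (-ρ / √(1 - ρ ^ 2)) l := by
  have hγ := sqrt_one_sub_sq_pos hρ
  have hs : 0 < √(l ^ 2 + 1) := sqrt_pos.2 (by positivity)
  rw [hf_ssvi hρ]
  have : 0 < 1 / (2 * √(1 - ρ ^ 2) * √(l ^ 2 + 1)) := by positivity
  linarith

lemma abs_mul_gf_le_half {ρ b : ℝ} (hb : 0 ≤ b) (hb2 : b ≤ 2 / (1 + |ρ|)) (l : ℝ) :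
    |b * gf ρ l| ≤ 1 / 2 := by
  have hbρ : b * (1 + |ρ|) ≤ 2 := (le_div_iff₀ (by positivity)).1 hb2
  rw [gf, abs_mul, abs_of_nonneg hb, abs_div, abs_of_pos (four_pos : (0 : ℝ) < 4)]
  nlinarith [abs_Nf'_le ρ l, abs_nonneg (Nf' ρ l)]

/-- an SSVI slice (γ = √(1−ρ²), μ = −ρ/√(1−ρ²)) with
0 < b ≤ 2/(1+|ρ|) always satisfies the Fukasawa conditions. -/
theorem fukasawa_ssvi (ρ b : ℝ) (hρ : ρ ∈ Set.Ioo (-1 : ℝ) 1) (hb : 0 < b)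
    (hb2 : b ≤ 2 / (1 + |ρ|)) :
    FukasawaCond (Real.sqrt (1 - ρ ^ 2)) b ρ (-ρ / Real.sqrt (1 - ρ ^ 2)) := by
  intro l
  have hh := half_lt_hf_ssvi (abs_lt.2 hρ) l
  have hg := abs_le.1 (abs_mul_gf_le_half hb.le hb2 l)
  constructor <;> linarith
end

section
/- (No arbitrage domain for SSVI at the extremal slope.) Let ρ ∈ (−1,1), γ = √(1−ρ²), μ = −ρ/√(1−ρ²) and b = 2/(1+|ρ|). Then the SSVI is arbitrage-free if and only if σ ≥ √(1−ρ²). -/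
/-! ### Auxiliary machinery -/

private lemma sqrt_aux (u : ℝ) (hu : 0 < u) :
    Real.sqrt (((1 - u ^ 2) / (2 * u)) ^ 2 + 1) = (1 + u ^ 2) / (2 * u) := by
  rw [show ((1 - u ^ 2) / (2 * u)) ^ 2 + 1 = ((1 + u ^ 2) / (2 * u)) ^ 2 by
    field_simp; ring]
  exact Real.sqrt_sq (by positivity)

private lemma rpow_aux (x : ℝ) (hx : 0 < x) :
    (x ^ 2 : ℝ) ^ (-(3 : ℝ) / 2) = (x ^ 3)⁻¹ := by
  rw [← Real.rpow_natCast x 2, ← Real.rpow_mul hx.le, ← Real.rpow_natCast x 3,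
    ← Real.rpow_neg hx.le]
  norm_num

private lemma Nf_val (u v : ℝ) (hu : 0 < u) (hv : 0 < v) :
    Nf (2*v/(1+v^2)) ((1-v^2)/(1+v^2)) ((1-u^2)/(2*u)) = (1+u*v)^2/(u*(1+v^2)) := by
  simp only [Nf]
  rw [sqrt_aux u hu]
  have h1 : (1:ℝ)+v^2 ≠ 0 := by positivity
  field_simp
  ring

private lemma fm_id (u v : ℝ) (hu : 0 < u) (hv : 0 < v) :
    hf (2*v/(1+v^2)) ((1-v^2)/(1+v^2)) (-((1-v^2)/(1+v^2))/(2*v/(1+v^2))) ((1-u^2)/(2*u))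
      - (1+v^2) * gf ((1-v^2)/(1+v^2)) ((1-u^2)/(2*u))
    = u*(1+u*v)*(1+v^2)/(2*v*(1+u^2)) := by
  have huv : (0:ℝ) < 1 + u*v := by nlinarith [mul_pos hu hv]
  simp only [hf, gf, Nf']
  rw [Nf_val u v hu hv, sqrt_aux u hu]
  have h1 : (1:ℝ)+v^2 ≠ 0 := by positivity
  have h2 : (1:ℝ)+u^2 ≠ 0 := by positivity
  field_simp
  ring

private lemma fp_id (u v : ℝ) (hu : 0 < u) (hv : 0 < v) :
    hf (2*v/(1+v^2)) ((1-v^2)/(1+v^2)) (-((1-v^2)/(1+v^2))/(2*v/(1+v^2))) ((1-u^2)/(2*u))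
      + (1+v^2) * gf ((1-v^2)/(1+v^2)) ((1-u^2)/(2*u))
    = (1+u*v)*(u*(1-v^2)+2*v)/(2*v*(1+u^2)) := by
  have huv : (0:ℝ) < 1 + u*v := by nlinarith [mul_pos hu hv]
  simp only [hf, gf, Nf']
  rw [Nf_val u v hu hv, sqrt_aux u hu]
  have h1 : (1:ℝ)+v^2 ≠ 0 := by positivity
  have h2 : (1:ℝ)+u^2 ≠ 0 := by positivity
  field_simp
  ring

private lemma master (u v σ : ℝ) (hu : 0 < u) (hv : 0 < v) (hσ : 0 < σ) :
    G1 (2*v/(1+v^2)) (1+v^2) ((1-v^2)/(1+v^2)) (-((1-v^2)/(1+v^2))/(2*v/(1+v^2))) ((1-u^2)/(2*u))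
      + (1+v^2) / (2*σ) * g2 (2*v/(1+v^2)) ((1-v^2)/(1+v^2)) ((1-u^2)/(2*u))
    = (1+u*v) * (σ * (u*(2*v*(1+v^2)+u*(1+v^2)^2+u^2*v*(3+2*v^2-v^4)+u^3*(1+v^2)^2+u^4*v*(1-v^4)))
        + 4*u*v^2*(3*u^2+3*u*v-u^3*v-1)) / (4*v^2*σ*(1+u^2)^3) := by
  have huv : (0:ℝ) < 1 + u*v := by nlinarith [mul_pos hu hv]
  simp only [G1, hf, gf, g2, Nf', Nf'']
  rw [Nf_val u v hu hv, sqrt_aux u hu,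
    show ((1-u^2)/(2*u)) ^ 2 + 1 = ((1+u^2)/(2*u))^2 by field_simp; ring,
    rpow_aux _ (by positivity)]
  have h1 : (1:ℝ)+v^2 ≠ 0 := by positivity
  have h2 : (1:ℝ)+u^2 ≠ 0 := by positivity
  field_simp
  ring

private lemma unit_mul {a b c : ℝ} (_ha0 : 0 ≤ a) (ha1 : a ≤ 1) (hb0 : 0 ≤ b) (hbc : b ≤ c) :
    a * b ≤ c := le_trans (by nlinarith) hbc

private lemma W_nonneg (u v σ : ℝ) (hu : 0 < u) (hv : 0 < v) (hv1 : v ≤ 1)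
    (hσ : 2*v/(1+v^2) ≤ σ) :
    0 ≤ σ * (u*(2*v*(1+v^2)+u*(1+v^2)^2+u^2*v*(3+2*v^2-v^4)+u^3*(1+v^2)^2+u^4*v*(1-v^4)))
        + 4*u*v^2*(3*u^2+3*u*v-u^3*v-1) := by
  have hv2 : (0:ℝ) < 1+v^2 := by positivity
  have pv2 : v^2 ≤ 1 := by nlinarith
  have pv4 : v^4 ≤ 1 := by nlinarith [sq_nonneg v]
  have h14 : (0:ℝ) ≤ 1 - v^4 := by linarith
  have h32 : (0:ℝ) ≤ 3 + 2*v^2 - v^4 := by linarith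
  have hA : 0 ≤ u*(2*v*(1+v^2)+u*(1+v^2)^2+u^2*v*(3+2*v^2-v^4)+u^3*(1+v^2)^2+u^4*v*(1-v^4)) := by
    apply mul_nonneg hu.le
    have t1 : (0:ℝ) ≤ u^2*v*(3+2*v^2-v^4) := mul_nonneg (by positivity) h32
    have t2 : (0:ℝ) ≤ u^4*v*(1-v^4) := mul_nonneg (by positivity) h14
    have t3 : (0:ℝ) ≤ 2*v*(1+v^2) := by positivity
    have t4 : (0:ℝ) ≤ u*(1+v^2)^2 := by positivity
    have t5 : (0:ℝ) ≤ u^3*(1+v^2)^2 := by positivity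
    linarith
  have hT : 0 ≤ 2*v*(u*(2*v*(1+v^2)+u*(1+v^2)^2+u^2*v*(3+2*v^2-v^4)+u^3*(1+v^2)^2+u^4*v*(1-v^4)))
      + (1+v^2)*(4*u*v^2*(3*u^2+3*u*v-u^3*v-1)) := by
    have hid : 2*v*(u*(2*v*(1+v^2)+u*(1+v^2)^2+u^2*v*(3+2*v^2-v^4)+u^3*(1+v^2)^2+u^4*v*(1-v^4)))
        + (1+v^2)*(4*u*v^2*(3*u^2+3*u*v-u^3*v-1))
        = 2*u^2*v*((1+v^2)*(1+7*v^2)+u*v*(9+8*v^2-v^4)+u^2*(1-v^4)+u^3*v*(1-v^4)) := by ring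
    rw [hid]
    apply mul_nonneg (by positivity)
    have t1 : (0:ℝ) ≤ u*v*(9+8*v^2-v^4) := mul_nonneg (by positivity) (by linarith)
    have t2 : (0:ℝ) ≤ u^2*(1-v^4) := mul_nonneg (by positivity) h14
    have t3 : (0:ℝ) ≤ u^3*v*(1-v^4) := mul_nonneg (by positivity) h14
    have t4 : (0:ℝ) ≤ (1+v^2)*(1+7*v^2) := by positivity
    linarith
  have h3 : 0 ≤ ((1+v^2)*σ - 2*v)
      * (u*(2*v*(1+v^2)+u*(1+v^2)^2+u^2*v*(3+2*v^2-v^4)+u^3*(1+v^2)^2+u^4*v*(1-v^4))) := by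
    apply mul_nonneg _ hA
    have hcc : (1+v^2)*(2*v/(1+v^2)) = 2*v := by field_simp
    nlinarith [mul_le_mul_of_nonneg_left hσ hv2.le]
  nlinarith [h3, hT, hv2]

private lemma W_neg (v σ : ℝ) (hv : 0 < v) (hv1 : v ≤ 1) (hσ0 : 0 < σ)
    (hσc : σ < 2*v/(1+v^2)) :
    ∃ u : ℝ, 0 < u ∧
      σ * (u*(2*v*(1+v^2)+u*(1+v^2)^2+u^2*v*(3+2*v^2-v^4)+u^3*(1+v^2)^2+u^4*v*(1-v^4)))
        + 4*u*v^2*(3*u^2+3*u*v-u^3*v-1) < 0 := by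
  have hv2 : (0:ℝ) < 1+v^2 := by positivity
  rw [lt_div_iff₀ hv2] at hσc
  have hε : 0 < 2*v^2 - v*(1+v^2)*σ := by nlinarith
  refine ⟨(2*v^2 - v*(1+v^2)*σ)/100, by positivity, ?_⟩
  set u : ℝ := (2*v^2 - v*(1+v^2)*σ)/100 with hudef
  have hu0 : 0 < u := by positivity
  have hu_eq : (100:ℝ)*u = 2*v^2 - v*(1+v^2)*σ := by rw [hudef]; ring
  have pv2 : v^2 ≤ 1 := by nlinarith
  have pv4 : v^4 ≤ 1 := by nlinarith [sq_nonneg v]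
  have hu1 : u ≤ 1 := by nlinarith [mul_pos hv hσ0, sq_nonneg v]
  have hσ1 : σ ≤ 1 := by nlinarith [sq_nonneg (1-v)]
  have pu2 : u^2 ≤ 1 := by nlinarith
  have pu3 : u^3 ≤ 1 := by nlinarith
  have huv1 : u*v ≤ 1 := unit_mul hu0.le hu1 hv.le hv1
  have key : σ * (u*(2*v*(1+v^2)+u*(1+v^2)^2+u^2*v*(3+2*v^2-v^4)+u^3*(1+v^2)^2+u^4*v*(1-v^4)))
        + 4*u*v^2*(3*u^2+3*u*v-u^3*v-1)
      = u^2*(σ*((1+v^2)^2+u*v*(3+2*v^2-v^4)+u^2*(1+v^2)^2+u^3*v*(1-v^4))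
          + 4*v^2*(3*u+3*v-u^2*v) - 200) := by
    linear_combination (2*u) * hu_eq
  rw [key]
  apply mul_neg_of_pos_of_neg (by positivity)
  have t1 : (1+v^2)^2 ≤ 4 := by nlinarith
  have t1' : (0:ℝ) ≤ (1+v^2)^2 := by positivity
  have pv0 : (0:ℝ) ≤ v^4 := by positivity
  have t2 : u*v*(3+2*v^2-v^4) ≤ 5 :=
    unit_mul (by positivity) huv1 (by linarith) (by linarith)
  have t3 : u^2*(1+v^2)^2 ≤ 4 := unit_mul (sq_nonneg u) pu2 t1' t1
  have hu3v : u^3*v ≤ 1 := unit_mul (by positivity) pu3 hv.le hv1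
  have t4 : u^3*v*(1-v^4) ≤ 1 :=
    unit_mul (by positivity) hu3v (by linarith) (by linarith)
  have hQ1nn : 0 ≤ (1+v^2)^2+u*v*(3+2*v^2-v^4)+u^2*(1+v^2)^2+u^3*v*(1-v^4) := by
    have s1 : (0:ℝ) ≤ u*v*(3+2*v^2-v^4) := mul_nonneg (by positivity) (by linarith)
    have s2 : (0:ℝ) ≤ u^3*v*(1-v^4) := mul_nonneg (by positivity) (by linarith)
    have s3 : (0:ℝ) ≤ u^2*(1+v^2)^2 := by positivity
    linarith
  have hQ1b : (1+v^2)^2+u*v*(3+2*v^2-v^4)+u^2*(1+v^2)^2+u^3*v*(1-v^4) ≤ 50 := by linarith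
  have hσQ1 : σ*((1+v^2)^2+u*v*(3+2*v^2-v^4)+u^2*(1+v^2)^2+u^3*v*(1-v^4)) ≤ 50 :=
    unit_mul hσ0.le hσ1 hQ1nn hQ1b
  have hX0 : (0:ℝ) ≤ 3*u+3*v-u^2*v := by
    have : u^2*v ≤ v := unit_mul (sq_nonneg u) pu2 hv.le le_rfl
    linarith
  have hX6 : 3*u+3*v-u^2*v ≤ 6 := by
    have : (0:ℝ) ≤ u^2*v := by positivity
    linarith
  have hQ2 : 4*v^2*(3*u+3*v-u^2*v) ≤ 24 := by
    have : v^2*(3*u+3*v-u^2*v) ≤ 6 := unit_mul (sq_nonneg v) pv2 hX0 hX6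
    linarith
  linarith

private lemma exists_u (l : ℝ) : ∃ u : ℝ, 0 < u ∧ (1-u^2)/(2*u) = l := by
  set s : ℝ := Real.sqrt (l^2+1) with hsdef
  have hs2 : s^2 = l^2+1 := Real.sq_sqrt (by positivity)
  have hs0 : 0 ≤ s := Real.sqrt_nonneg _
  have hls : l < s := by nlinarith
  refine ⟨s - l, by linarith, ?_⟩
  rw [div_eq_iff (ne_of_gt (by linarith : (0:ℝ) < 2*(s-l)))]
  linear_combination -hs2

/-! ### The v-parametrized equivalence -/

private lemma vland (v σ : ℝ) (hv0 : 0 < v) (hv1 : v ≤ 1) (hσ : 0 < σ) :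
    ArbitrageFree (2*v/(1+v^2)) (2/(1+(1-v^2)/(1+v^2))) ((1-v^2)/(1+v^2))
      (-((1-v^2)/(1+v^2))/(2*v/(1+v^2))) σ ↔ σ ≥ 2*v/(1+v^2) := by
  have hv2 : (0:ℝ) < 1+v^2 := by positivity
  have hb : (2:ℝ)/(1+(1-v^2)/(1+v^2)) = 1+v^2 := by
    rw [show (1:ℝ)+(1-v^2)/(1+v^2) = 2/(1+v^2) by field_simp; ring]
    field_simp
  rw [hb]
  constructor
  · rintro ⟨-, hG⟩
    by_contra hlt
    push_neg at hlt
    obtain ⟨u, hu0, hWneg⟩ := W_neg v σ hv0 hv1 hσ hlt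
    have h := hG ((1-u^2)/(2*u))
    rw [master u v σ hu0 hv0 hσ] at h
    have huv : (0:ℝ) < 1 + u*v := by nlinarith [mul_pos hu0 hv0]
    have hneg : (1+u*v) * (σ * (u*(2*v*(1+v^2)+u*(1+v^2)^2+u^2*v*(3+2*v^2-v^4)
          +u^3*(1+v^2)^2+u^4*v*(1-v^4))) + 4*u*v^2*(3*u^2+3*u*v-u^3*v-1))
          / (4*v^2*σ*(1+u^2)^3) < 0 :=
      div_neg_of_neg_of_pos (mul_neg_of_pos_of_neg huv hWneg) (by positivity)
    linarith
  · intro hσc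
    have hσc' : 2*v/(1+v^2) ≤ σ := hσc
    constructor
    · intro l
      obtain ⟨u, hu0, rfl⟩ := exists_u l
      have huv : (0:ℝ) < 1 + u*v := by nlinarith [mul_pos hu0 hv0]
      constructor
      · rw [fm_id u v hu0 hv0]
        exact div_pos (by positivity) (by positivity)
      · rw [fp_id u v hu0 hv0]
        apply div_pos _ (by positivity)
        apply mul_pos huv
        have : (0:ℝ) ≤ u*(1-v^2) := mul_nonneg hu0.le (by nlinarith)
        linarith
    · intro l
      obtain ⟨u, hu0, rfl⟩ := exists_u l
      rw [master u v σ hu0 hv0 hσ]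
      have huv : (0:ℝ) < 1 + u*v := by nlinarith [mul_pos hu0 hv0]
      exact div_nonneg (mul_nonneg huv.le (W_nonneg u v σ hu0 hv0 hv1 hσc')) (by positivity)

/-! ### Reduction from ρ to v -/

private lemma pos_case (ρ σ : ℝ) (h1 : -1 < ρ) (h2 : ρ < 1) (hρ0 : 0 ≤ ρ) (hσ : 0 < σ) :
    ArbitrageFree (Real.sqrt (1 - ρ ^ 2)) (2 / (1 + |ρ|)) ρ
        (-ρ / Real.sqrt (1 - ρ ^ 2)) σ ↔
      σ ≥ Real.sqrt (1 - ρ ^ 2) := by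
  have hpos : 0 < 1 - ρ^2 := by nlinarith
  set c : ℝ := Real.sqrt (1 - ρ ^ 2) with hcdef
  have hc0 : 0 < c := Real.sqrt_pos.mpr hpos
  have hc2 : c^2 = 1 - ρ^2 := Real.sq_sqrt hpos.le
  have h1ρ : (0:ℝ) < 1 + ρ := by linarith
  set v : ℝ := c/(1+ρ) with hvdef
  have hv0 : 0 < v := div_pos hc0 h1ρ
  have hv1 : v ≤ 1 := by
    rw [hvdef, div_le_one h1ρ]
    nlinarith [hc0.le]
  have hvsq : v^2 = (1-ρ)/(1+ρ) := by
    rw [hvdef, div_pow]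
    rw [div_eq_div_iff (by positivity) (by positivity)]
    linear_combination (1+ρ) * hc2
  have h1v : 1+v^2 = 2/(1+ρ) := by
    rw [hvsq]
    field_simp
    ring
  have hρv : ρ = (1-v^2)/(1+v^2) := by
    rw [hvsq]
    rw [eq_div_iff (by rw [← hvsq]; positivity)]
    field_simp
    ring
  have hγv : c = 2*v/(1+v^2) := by
    rw [h1v, hvdef]
    field_simp
  have habs : |ρ| = ρ := abs_of_nonneg hρ0
  rw [habs, hγv, hρv]
  exact vland v σ hv0 hv1 hσ

/-! ### Reflection symmetry ρ ↦ -ρ -/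

private lemma Nf_reflect (γ ρ l : ℝ) : Nf γ (-ρ) (-l) = Nf γ ρ l := by
  simp only [Nf]
  rw [show ((-l:ℝ)^2) = l^2 by ring]
  ring

private lemma Nf'_reflect (ρ l : ℝ) : Nf' (-ρ) (-l) = -(Nf' ρ l) := by
  simp only [Nf']
  rw [show ((-l:ℝ)^2) = l^2 by ring]
  ring

private lemma Nf''_reflect (l : ℝ) : Nf'' (-l) = Nf'' l := by
  simp only [Nf'']
  rw [show ((-l:ℝ)^2) = l^2 by ring]

private lemma hf_reflect (γ ρ μ l : ℝ) : hf γ (-ρ) (-μ) (-l) = hf γ ρ μ l := by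
  simp only [hf]
  rw [Nf_reflect, Nf'_reflect]
  ring

private lemma gf_reflect (ρ l : ℝ) : gf (-ρ) (-l) = -(gf ρ l) := by
  simp only [gf]
  rw [Nf'_reflect]
  ring

private lemma g2_reflect (γ ρ l : ℝ) : g2 γ (-ρ) (-l) = g2 γ ρ l := by
  simp only [g2]
  rw [Nf_reflect, Nf'_reflect, Nf''_reflect]
  ring

private lemma G1_reflect (γ b ρ μ l : ℝ) : G1 γ b (-ρ) (-μ) (-l) = G1 γ b ρ μ l := by
  simp only [G1]
  rw [hf_reflect, gf_reflect]
  ring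

private lemma AF_reflect_mp (γ b ρ μ σ : ℝ) (h : ArbitrageFree γ b ρ μ σ) :
    ArbitrageFree γ b (-ρ) (-μ) σ := by
  obtain ⟨hF, hG⟩ := h
  constructor
  · intro l
    have e1 := hf_reflect γ ρ μ (-l)
    have e2 := gf_reflect ρ (-l)
    rw [neg_neg] at e1 e2
    rw [e1, e2]
    obtain ⟨hm, hp⟩ := hF (-l)
    constructor <;> [linarith; linarith]
  · intro l
    have e3 := G1_reflect γ b ρ μ (-l)
    have e4 := g2_reflect γ ρ (-l)
    rw [neg_neg] at e3 e4
    rw [e3, e4]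
    exact hG (-l)

private lemma AF_reflect (γ b ρ μ σ : ℝ) :
    ArbitrageFree γ b ρ μ σ ↔ ArbitrageFree γ b (-ρ) (-μ) σ := by
  constructor
  · exact AF_reflect_mp γ b ρ μ σ
  · intro h
    have := AF_reflect_mp γ b (-ρ) (-μ) σ h
    rwa [neg_neg, neg_neg] at this

/-- no-arbitrage domain for SSVI at the extremal slope b = 2/(1+|ρ|). -/
theorem ssvi_extremal_slope (ρ σ : ℝ) (hρ : ρ ∈ Set.Ioo (-1 : ℝ) 1) (hσ : 0 < σ) :
    ArbitrageFree (Real.sqrt (1 - ρ ^ 2)) (2 / (1 + |ρ|)) ρ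
        (-ρ / Real.sqrt (1 - ρ ^ 2)) σ ↔
      σ ≥ Real.sqrt (1 - ρ ^ 2) := by
  obtain ⟨h1, h2⟩ := hρ
  rcases le_total 0 ρ with hρ0 | hρ0
  · exact pos_case ρ σ h1 h2 hρ0 hσ
  · have h := pos_case (-ρ) σ (by linarith) (by linarith) (by linarith) hσ
    simp only [neg_neg, neg_sq, abs_neg] at h
    have hsym := AF_reflect (Real.sqrt (1 - ρ ^ 2)) (2 / (1 + |ρ|)) ρ
      (-ρ / Real.sqrt (1 - ρ ^ 2)) σ
    rw [show -(-ρ / Real.sqrt (1 - ρ ^ 2)) = ρ / Real.sqrt (1 - ρ ^ 2) from by ring] at hsym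
    exact hsym.trans h
end
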